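/- arXiv:2506.03932 — 2 statements merged into one kernel-verified Lean document; each statement's English description precedes it below -/
import Mathlib

section
/- Let U be an m×n integer matrix and b ∈ ℤ^m. If the system Uy = b has a solution y ∈ ℤ^n, then it has a solution y whose entries satisfy max_i log|y_i| ≤ m·h + (1/2)·m·log m, where h is the maximum of the logarithms of the absolute values of the nonzero entries of U and b (with h ≥ 0). -/
/-!
Induct on `m`. If all maximal minors of `U` vanish, its rows are dependent over `ℚ`, so one
equation is implied by the others and can be dropped. Otherwise choose columns `g` whose minor
`D` has maximal absolute value. The lattice spanned by these columns has index `|D|` in `ℤᵐ`,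
so any solution can be shifted to one whose coordinates off `g` have `ℓ¹`-norm `< |D|`: in a
group of order `|D|` every element of the image is reached in fewer than `|D|` unit steps. By
Cramer's rule, with each column exchange bounded by `|D|`, the coordinates on `g` are then
bounded by the largest `m × m` minor of `(U | b)`, and Hadamard's inequality gives
`(√m · eʰ)ᵐ`.
-/

open Matrix Finset

lemma Matrix.abs_det_le_prod_norm_col {m : ℕ} (A : Matrix (Fin m) (Fin m) ℝ) :
    |A.det| ≤ ∏ j, ‖WithLp.toLp 2 (A.col j)‖ := by
  have : Fact (Module.finrank ℝ (EuclideanSpace ℝ (Fin m)) = m) := ⟨finrank_euclideanSpace_fin⟩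
  let b := EuclideanSpace.basisFun (Fin m) ℝ
  have hvol := b.toBasis.orientation.abs_volumeForm_apply_le fun j => WithLp.toLp 2 (A.col j)
  rw [b.toBasis.orientation.volumeForm_robust' b, Module.Basis.det_apply] at hvol
  convert hvol using 3
  ext i j
  simp [b, Module.Basis.toMatrix_apply]

lemma EuclideanSpace.norm_toLp_le_sqrt_card_mul {ι : Type*} [Fintype ι] {v : ι → ℝ} {B : ℝ}
    (hB : 0 ≤ B) (hv : ∀ i, |v i| ≤ B) : ‖WithLp.toLp 2 v‖ ≤ √(Fintype.card ι) * B := by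
  rw [EuclideanSpace.norm_eq, ← Real.sqrt_sq hB, ← Real.sqrt_mul (Nat.cast_nonneg _)]
  refine Real.sqrt_le_sqrt ?_
  calc ∑ i, ‖(WithLp.toLp 2 v) i‖ ^ 2 ≤ ∑ _i : ι, B ^ 2 :=
        sum_le_sum fun i _ => by simpa [sq_abs] using pow_le_pow_left₀ (abs_nonneg _) (hv i) 2
    _ = _ := by simp

lemma Matrix.abs_det_le_of_abs_le {m : ℕ} (A : Matrix (Fin m) (Fin m) ℝ) {B : ℝ} (hB : 0 ≤ B)
    (hA : ∀ i j, |A i j| ≤ B) : |A.det| ≤ (√m * B) ^ m := by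
  refine A.abs_det_le_prod_norm_col.trans ?_
  simpa using prod_le_prod (s := univ) (fun j _ => norm_nonneg _)
    fun j _ => EuclideanSpace.norm_toLp_le_sqrt_card_mul (v := A.col j) hB fun i => hA i j

lemma Matrix.natCard_quotient_range_mulVecLin {ι : Type*} [Fintype ι] [DecidableEq ι]
    (A : Matrix ι ι ℤ) (hA : A.det ≠ 0) :
    Nat.card ((ι → ℤ) ⧸ LinearMap.range A.mulVecLin) = A.det.natAbs := by
  have hinj : Function.Injective A.mulVecLin := isLeftRegular_iff_mulVec_injective.mp
    (isRegular_of_isLeftRegular_det (IsRegular.of_ne_zero hA).left).left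
  rw [← Submodule.natAbs_det_equiv _ (LinearEquiv.ofInjective _ hinj), ← LinearMap.det_toLin']
  rfl

lemma Set.exists_lt_natCard_succ_subset {G : Type*} [Finite G] {S : ℕ → Set G}
    (hS : Monotone S) (h0 : (S 0).Nonempty) : ∃ r < Nat.card G, S (r + 1) ⊆ S r := by
  by_contra! h
  have hgrowth : ∀ r ≤ Nat.card G, r + 1 ≤ (S r).ncard := by
    intro r
    induction r with
    | zero => exact fun _ => (Set.ncard_pos (Set.toFinite _)).mpr h0
    | succ r ih =>
      intro hr
      have hlt : (S r).ncard < (S (r + 1)).ncard :=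
        Set.ncard_lt_ncard ⟨hS r.le_succ, h r (by omega)⟩ (Set.toFinite _)
      have := ih (by omega)
      omega
  have := hgrowth _ le_rfl
  have := Set.ncard_le_card (S (Nat.card G))
  omega

lemma sum_abs_add_single_le {ι : Type*} [Fintype ι] [DecidableEq ι] (δ : ι → ℤ) (j : ι) (σ : ℤ) :
    ∑ i, |δ i + (Pi.single j σ : ι → ℤ) i| ≤ ∑ i, |δ i| + |σ| := by
  calc ∑ i, |δ i + (Pi.single j σ : ι → ℤ) i| ≤ ∑ i, (|δ i| + |(Pi.single j σ : ι → ℤ) i|) :=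
        sum_le_sum fun i _ => abs_add_le _ _
    _ = ∑ i, |δ i| + |σ| := by
        simp [sum_add_distrib, Pi.apply_single (fun _ => abs) (fun _ => abs_zero)]

lemma AddMonoidHom.exists_map_eq_sum_abs_lt {ι G : Type*} [Fintype ι] [DecidableEq ι]
    [AddCommGroup G] [Finite G] (φ : (ι → ℤ) →+ G) (y : ι → ℤ) :
    ∃ δ, φ δ = φ y ∧ ∑ i, |δ i| < Nat.card G := by
  -- `S r`, the image of the `ℓ¹`-ball of radius `r`, grows strictly until it stabilises, and a
  -- stable `S r` is closed under adding `± φ (Pi.single j 1)`, hence contains all of `range φ`.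
  set S : ℕ → Set G := fun r => φ '' {δ | ∑ i, |δ i| ≤ r}
  have hmono : Monotone S := fun r r' h =>
    Set.image_mono fun δ (hδ : ∑ i, |δ i| ≤ r) => hδ.trans (by exact_mod_cast h)
  have hstep : ∀ r, ∀ x ∈ S r, ∀ j (σ : ℤ), |σ| ≤ 1 → x + φ (Pi.single j σ) ∈ S (r + 1) := by
    rintro r _ ⟨δ, hδ, rfl⟩ j σ hσ
    refine ⟨δ + Pi.single j σ, ?_, map_add φ _ _⟩
    calc ∑ i, |(δ + Pi.single j σ : ι → ℤ) i| ≤ ∑ i, |δ i| + |σ| := by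
          simpa only [Pi.add_apply] using sum_abs_add_single_le δ j σ
      _ ≤ r + 1 := add_le_add hδ hσ
  have hstable : ∀ r, S (r + 1) ⊆ S r → ∀ δ, φ δ ∈ S r := by
    intro r hsub δ
    suffices ∀ x ∈ S r, x + φ δ ∈ S r by
      simpa using this 0 ⟨0, by simp, map_zero φ⟩
    induction δ using Pi.single_induction with
    | zero => simp
    | add f g hf hg =>
      intro x hx
      rw [map_add, ← add_assoc]
      exact hg _ (hf x hx)
    | single j a =>
      induction a using Int.induction_on with
      | zero => simp
      | succ a ih =>
        intro x hx
        rw [Pi.single_add, map_add, ← add_assoc]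
        exact hsub (hstep r _ (ih x hx) j 1 (by norm_num))
      | pred a ih =>
        intro x hx
        rw [sub_eq_add_neg, Pi.single_add, map_add, ← add_assoc]
        exact hsub (hstep r _ (ih x hx) j (-1) (by norm_num))
  obtain ⟨r, hr, hsub⟩ := Set.exists_lt_natCard_succ_subset hmono ⟨φ 0, 0, by simp, rfl⟩
  obtain ⟨δ, hδ, hφδ⟩ := hstable r hsub y
  exact ⟨δ, hφδ, lt_of_le_of_lt hδ (by exact_mod_cast hr)⟩

lemma Matrix.det_updateCol_mulVec {R ι κ : Type*} [CommRing R] [Fintype ι] [DecidableEq ι]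
    [Fintype κ] [DecidableEq κ] (U : Matrix ι κ R) (g : ι → κ) (i : ι) (y : κ → R) :
    ((U.submatrix id g).updateCol i (U *ᵥ y)).det =
      ∑ j, y j * (U.submatrix id (Function.update g i j)).det := by
  have hcol : U *ᵥ y = ∑ j, y j • U.col j := by
    ext r; simp [mulVec, dotProduct, Finset.sum_apply, mul_comm]
  rw [← cramer_apply, hcol, map_sum, Finset.sum_apply]
  refine Finset.sum_congr rfl fun j _ => ?_
  rw [map_smul, Pi.smul_apply, smul_eq_mul, cramer_apply]
  congr 2
  ext r c
  by_cases hc : c = i <;> simp [hc]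

lemma Matrix.abs_det_mul_abs_le {ι κ : Type*} [Fintype ι] [DecidableEq ι] [Fintype κ]
    [DecidableEq κ] (U : Matrix ι κ ℤ) (y : κ → ℤ) {g : ι → κ}
    (hmax : ∀ g', |(U.submatrix id g').det| ≤ |(U.submatrix id g).det|) (i : ι) :
    |(U.submatrix id g).det| * |y (g i)| ≤ |((U.submatrix id g).updateCol i (U *ᵥ y)).det| +
      |(U.submatrix id g).det| * ∑ j ∈ (univ.image g)ᶜ, |y j| := by
  set D := (U.submatrix id g).det
  have hexpand := U.det_updateCol_mulVec g i y
  rw [← add_sum_erase _ _ (mem_univ (g i)), Function.update_eq_self] at hexpand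
  have hbasis : ∑ j ∈ univ.erase (g i), y j * (U.submatrix id (Function.update g i j)).det =
      ∑ j ∈ (univ.image g)ᶜ, y j * (U.submatrix id (Function.update g i j)).det := by
    refine (sum_subset (fun j hj => mem_erase.mpr ⟨fun h => ?_, mem_univ j⟩)
      fun j hj hj' => ?_).symm
    · exact mem_compl.mp hj (h ▸ mem_image_of_mem g (mem_univ i))
    · obtain ⟨i', -, rfl⟩ := mem_image.mp (notMem_compl.mp hj')
      have hi' : i' ≠ i := fun h => ne_of_mem_erase hj (h ▸ rfl)
      rw [det_zero_of_column_eq hi'.symm fun r => by simp [Function.update_of_ne hi'], mul_zero]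
  have hsum : |∑ j ∈ (univ.image g)ᶜ, y j * (U.submatrix id (Function.update g i j)).det| ≤
      |D| * ∑ j ∈ (univ.image g)ᶜ, |y j| := by
    rw [mul_sum]
    refine (abs_sum_le_sum_abs _ _).trans (sum_le_sum fun j _ => ?_)
    rw [abs_mul, mul_comm]
    exact mul_le_mul_of_nonneg_right (hmax _) (abs_nonneg _)
  calc |D| * |y (g i)| = |((U.submatrix id g).updateCol i (U *ᵥ y)).det -
        ∑ j ∈ (univ.image g)ᶜ, y j * (U.submatrix id (Function.update g i j)).det| := by
        rw [hexpand, ← hbasis, add_sub_cancel_right, abs_mul, mul_comm]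
    _ ≤ |((U.submatrix id g).updateCol i (U *ᵥ y)).det| +
          |∑ j ∈ (univ.image g)ᶜ, y j * (U.submatrix id (Function.update g i j)).det| :=
        abs_sub _ _
    _ ≤ _ := by gcongr

lemma Matrix.exists_mulVec_eq_sum_abs_lt {ι κ : Type*} [Fintype ι] [DecidableEq ι] [Fintype κ]
    [DecidableEq κ] (U : Matrix ι κ ℤ) (y₀ : κ → ℤ) {g : ι → κ}
    (hg : (U.submatrix id g).det ≠ 0) :
    ∃ y, U *ᵥ y = U *ᵥ y₀ ∧ ∑ j ∈ (univ.image g)ᶜ, |y j| < |(U.submatrix id g).det| := by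
  set A := U.submatrix id g
  set Λ := LinearMap.range A.mulVecLin
  have hcard := A.natCard_quotient_range_mulVecLin hg
  have : Finite ((ι → ℤ) ⧸ Λ) :=
    Nat.finite_of_card_ne_zero (by rw [hcard]; exact Int.natAbs_ne_zero.mpr hg)
  obtain ⟨δ, hδ, hsum⟩ := (Λ.mkQ ∘ₗ U.mulVecLin).toAddMonoidHom.exists_map_eq_sum_abs_lt y₀
  rw [hcard, Int.natCast_natAbs] at hsum
  obtain ⟨x, hx⟩ : U *ᵥ y₀ - U *ᵥ δ ∈ Λ := (Submodule.Quotient.eq Λ).mp hδ.symm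
  -- `P *ᵥ x` places the coordinates of `x` on the columns `g`.
  set P : Matrix κ ι ℤ := (1 : Matrix κ κ ℤ).submatrix id g
  have hUP : U * P = A := mul_submatrix_one (Equiv.refl κ) g U
  refine ⟨δ + P *ᵥ x, ?_, lt_of_le_of_lt ?_ hsum⟩
  · rw [mulVec_add, mulVec_mulVec, hUP, ← mulVecLin_apply A, hx, add_sub_cancel]
  · refine (sum_le_sum fun j hj => ?_).trans
      (sum_le_sum_of_subset_of_nonneg (subset_univ _) fun _ _ _ => abs_nonneg _)
    have : (P *ᵥ x) j = 0 := by
      refine sum_eq_zero fun i _ => ?_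
      have hji : j ≠ g i := fun h => mem_compl.mp hj (h ▸ mem_image_of_mem g (mem_univ i))
      simp [P, hji]
    simp [this]

lemma Matrix.exists_mulVec_eq_abs_le_of_abs_det_le {ι κ : Type*} [Fintype ι] [DecidableEq ι]
    [Fintype κ] [DecidableEq κ] (U : Matrix ι κ ℤ) (y₀ : κ → ℤ) {M : ℝ}
    (hminor : ∀ g, |((U.submatrix id g).det : ℝ)| ≤ M)
    (hminor' : ∀ g i, |(((U.submatrix id g).updateCol i (U *ᵥ y₀)).det : ℝ)| ≤ M)
    (hrank : ∃ g, (U.submatrix id g).det ≠ 0) :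
    ∃ y, U *ᵥ y = U *ᵥ y₀ ∧ ∀ j, |(y j : ℝ)| ≤ M := by
  obtain ⟨g₀, hg₀⟩ := hrank
  -- Maximality of `|det|` at `g` bounds every minor appearing in Cramer's rule by `|D|`.
  obtain ⟨g, -, hmax⟩ :=
    exists_max_image univ (fun g => |(U.submatrix id g).det|) ⟨g₀, mem_univ _⟩
  have hD : (U.submatrix id g).det ≠ 0 :=
    abs_pos.mp ((abs_pos.mpr hg₀).trans_le (hmax g₀ (mem_univ _)))
  obtain ⟨y, hy, hsum⟩ := U.exists_mulVec_eq_sum_abs_lt y₀ hD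
  refine ⟨y, hy, fun j => ?_⟩
  set D := (U.submatrix id g).det
  set s := ∑ j ∈ (univ.image g)ᶜ, |y j|
  have hDM : |(D : ℝ)| ≤ M := hminor g
  have hs : (s : ℝ) ≤ |(D : ℝ)| - 1 := by exact_mod_cast Int.le_sub_one_of_lt hsum
  by_cases hj : j ∈ univ.image g
  · obtain ⟨i, -, rfl⟩ := mem_image.mp hj
    have hcramer := U.abs_det_mul_abs_le y (fun g' => hmax g' (mem_univ _)) i
    rw [hy] at hcramer
    have hcramer' : |(D : ℝ)| * |(y (g i) : ℝ)| ≤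
        |(((U.submatrix id g).updateCol i (U *ᵥ y₀)).det : ℝ)| + |(D : ℝ)| * s := by
      exact_mod_cast hcramer
    have := hminor' g i
    have hD1 : (1 : ℝ) ≤ |(D : ℝ)| := by exact_mod_cast Int.one_le_abs hD
    nlinarith
  · have : (|y j| : ℝ) ≤ s := by
      exact_mod_cast single_le_sum (fun j _ => abs_nonneg (y j)) (mem_compl.mpr hj)
    linarith

lemma Matrix.exists_det_submatrix_ne_zero_of_linearIndependent {K ι : Type*} [Field K]
    [Fintype ι] {m : ℕ}
    (V : Matrix (Fin m) ι K) (hV : LinearIndependent K V.row) :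
    ∃ g : Fin m → ι, (V.submatrix id g).det ≠ 0 := by
  have hspan : Submodule.span K (Set.range V.col) = ⊤ := by
    apply Submodule.eq_top_of_finrank_eq
    rw [← rank_eq_finrank_span_cols, hV.rank_matrix, Module.finrank_fin_fun, Fintype.card_fin]
  obtain ⟨κ, a, -, hspan', hli⟩ := exists_linearIndependent' K V.col
  have : Finite κ := hli.finite
  have : Fintype κ := Fintype.ofFinite κ
  have hcard : Fintype.card κ = m := by
    rw [← finrank_span_eq_card hli, hspan', hspan, finrank_top, Module.finrank_fin_fun]
  let e : Fin m ≃ κ := (Fintype.equivFinOfCardEq hcard).symm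
  refine ⟨a ∘ e, fun h => ?_⟩
  have hli' : LinearIndependent K (V.submatrix id (a ∘ e)).col := hli.comp e e.injective
  exact (isUnit_iff_isUnit_det _ |>.mp (linearIndependent_cols_iff_isUnit.mp hli')).ne_zero h

lemma Matrix.mulVec_eq_of_vecMul_eq_zero {R ι κ : Type*} [CommRing R] [NoZeroDivisors R]
    [Fintype ι] [Fintype κ] {V : Matrix ι κ R} {c : ι → R} (hc : c ᵥ* V = 0) {k : ι}
    (hk : c k ≠ 0) {z z₀ : κ → R} (hz : ∀ i ≠ k, (V *ᵥ z) i = (V *ᵥ z₀) i) :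
    V *ᵥ z = V *ᵥ z₀ := by
  set d := V *ᵥ z - V *ᵥ z₀
  have hd : ∀ i ≠ k, d i = 0 := fun i hi => sub_eq_zero.mpr (hz i hi)
  have hcd : c ⬝ᵥ d = c k * d k :=
    sum_eq_single k (fun i _ hi => by rw [hd i hi, mul_zero]) (by simp)
  have : c ⬝ᵥ d = 0 := by
    rw [show d = V *ᵥ (z - z₀) from (mulVec_sub ..).symm, dotProduct_mulVec, hc, zero_dotProduct]
  have hdk : d k = 0 := (mul_eq_zero.mp (hcd ▸ this)).resolve_left hk
  refine sub_eq_zero.mp (funext fun i => ?_)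
  by_cases hi : i = k
  · exact hi ▸ hdk
  · exact hd i hi

lemma Matrix.exists_row_mulVec_eq_of_det_submatrix_eq_zero {ι : Type*} [Fintype ι]
    {m : ℕ} (U : Matrix (Fin m) ι ℤ) (hU : ∀ g : Fin m → ι, (U.submatrix id g).det = 0) :
    ∃ k, ∀ y y₀ : ι → ℤ, (∀ i ≠ k, (U *ᵥ y) i = (U *ᵥ y₀) i) → U *ᵥ y = U *ᵥ y₀ := by
  set V := U.map (Int.cast : ℤ → ℚ)
  have hdep : ¬LinearIndependent ℚ V.row := fun hV => by
    obtain ⟨g, hg⟩ := V.exists_det_submatrix_ne_zero_of_linearIndependent hV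
    have : V.submatrix id g = (U.submatrix id g).map (↑) := rfl
    exact hg (by rw [this, ← Int.cast_det, hU g, Int.cast_zero])
  obtain ⟨c, hc, k, hk⟩ := Fintype.not_linearIndependent_iff.mp hdep
  refine ⟨k, fun y y₀ hy => ?_⟩
  have hcast : ∀ z : ι → ℤ, V *ᵥ ((↑) ∘ z) = (↑) ∘ (U *ᵥ z) :=
    fun z => funext fun i => ((Int.castRingHom ℚ).map_mulVec U z i).symm
  have := mulVec_eq_of_vecMul_eq_zero (V := V) (by rwa [vecMul_eq_sum]) hk
    (z := (↑) ∘ y) (z₀ := (↑) ∘ y₀) fun i hi => by simp [hcast, hy i hi]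
  rw [hcast, hcast] at this
  exact funext fun i => Int.cast_injective (congrFun this i)

lemma Matrix.exists_mulVec_eq_abs_le {m n : ℕ} (U : Matrix (Fin m) (Fin n) ℤ) (y₀ : Fin n → ℤ)
    {B : ℝ} (hB : 1 ≤ B) (hU : ∀ i j, |(U i j : ℝ)| ≤ B) (hb : ∀ i, |((U *ᵥ y₀) i : ℝ)| ≤ B) :
    ∃ y, U *ᵥ y = U *ᵥ y₀ ∧ ∀ j, |(y j : ℝ)| ≤ (√m * B) ^ m := by
  induction m with
  | zero => exact ⟨0, Subsingleton.elim _ _, fun j => by simp⟩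
  | succ m ih =>
    by_cases hrank : ∃ g, (U.submatrix id g).det ≠ 0
    · refine U.exists_mulVec_eq_abs_le_of_abs_det_le y₀ (fun g => ?_) (fun g i => ?_) hrank
      · rw [Int.cast_det]
        exact abs_det_le_of_abs_le _ (by linarith) fun r c => hU r (g c)
      · rw [Int.cast_det]
        refine abs_det_le_of_abs_le _ (by linarith) fun r c => ?_
        by_cases hc : c = i
        · simpa [hc] using hb r
        · simpa [hc] using hU r (g c)
    · obtain ⟨k, hk⟩ := U.exists_row_mulVec_eq_of_det_submatrix_eq_zero (by simpa using hrank)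
      obtain ⟨y, hy, hbound⟩ := ih (U.submatrix k.succAbove id) (fun i j => hU _ j)
        fun i => hb (k.succAbove i)
      refine ⟨y, hk y y₀ fun i hi => ?_, fun j => (hbound j).trans ?_⟩
      · obtain ⟨i', rfl⟩ := Fin.exists_succAbove_eq hi
        exact congrFun hy i'
      · have hsqrt : √m * B ≤ √(m + 1 : ℕ) * B := by gcongr; simp
        have hone : 1 ≤ √(m + 1 : ℕ) * B :=
          one_le_mul_of_one_le_of_one_le (Real.one_le_sqrt.mpr (by simp)) hB
        exact (pow_le_pow_left₀ (by positivity) hsqrt m).trans (pow_le_pow_right₀ hone m.le_succ)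

lemma Real.abs_le_exp_of_log_abs_le {x h : ℝ} (hx : x ≠ 0 → Real.log |x| ≤ h) :
    |x| ≤ Real.exp h := by
  rcases eq_or_ne x 0 with rfl | hx0
  · simpa using (Real.exp_pos h).le
  · exact (Real.log_le_iff_le_exp (abs_pos.mpr hx0)).mp (hx hx0)

theorem stmt_12 (m n : ℕ) (U : Matrix (Fin m) (Fin n) ℤ) (b : Fin m → ℤ)
    (h : ℝ) (hh : 0 ≤ h)
    (hU : ∀ i j, U i j ≠ 0 → Real.log |(U i j : ℝ)| ≤ h)
    (hb : ∀ i, b i ≠ 0 → Real.log |(b i : ℝ)| ≤ h)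
    (hsol : ∃ y : Fin n → ℤ, U.mulVec y = b) :
    ∃ y : Fin n → ℤ, U.mulVec y = b ∧
      ∀ i, Real.log |(y i : ℝ)| ≤ m * h + (1 / 2) * m * Real.log m := by
  obtain ⟨y₀, rfl⟩ := hsol
  obtain ⟨y, hy, hbound⟩ := U.exists_mulVec_eq_abs_le y₀ (Real.one_le_exp hh)
    (fun i j => Real.abs_le_exp_of_log_abs_le fun hij => hU i j (by exact_mod_cast hij))
    (fun i => Real.abs_le_exp_of_log_abs_le fun hi => hb i (by exact_mod_cast hi))
  refine ⟨y, hy, fun i => ?_⟩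
  have hlog : Real.log ((√m * Real.exp h) ^ m) = m * h + (1 / 2) * m * Real.log m := by
    rw [Real.log_pow]
    rcases m.eq_zero_or_pos with rfl | hm
    · simp
    · rw [Real.log_mul (by positivity) (by positivity), Real.log_sqrt (by positivity), Real.log_exp]
      ring
  rcases eq_or_ne (y i) 0 with hi | hi
  · rw [hi, Int.cast_zero, abs_zero, Real.log_zero]
    positivity
  · exact hlog ▸ Real.log_le_log (by positivity) (hbound i)
end

section
/- Let f be a complex polynomial of degree n ≥ 2 with leading coefficient a_n and roots α₁,…,α_n. Then for every z ∈ ℂ, |f(z)| ≥ (|D(f)|^{1/2} / (n^{(n-1)/2} · 2^{n-1} · M(f)^{n-2})) · min_i |z − α_i|, where D(f) is the discriminant of f and M(f) its Mahler measure. -/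
/-
Let α_p be the root nearest to z. Then |α_p - α_j| ≤ 2 |z - α_j| for all j, so the differences
involving α_p contribute at most 2^(n-1) ∏_{j ≠ p} |z - α_j| = 2^(n-1) |f(z)| / (|a_n| |z - α_p|) to
√|D(f)| / |a_n|^(n-1). The differences among the other n - 1 roots form a Vandermonde determinant,
which Hadamard's inequality bounds by (n-1)^((n-1)/2) ∏_{j ≠ p} max(1, |α_j|)^(n-2), and this is
at most n^((n-1)/2) (M(f) / |a_n|)^(n-2).
-/

open Finset

theorem Matrix.norm_det_le_prod_norm_row {𝕜 : Type*} [RCLike 𝕜] {m : ℕ}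
    (A : Matrix (Fin m) (Fin m) 𝕜) : ‖A.det‖ ≤ ∏ i, ‖WithLp.toLp 2 (A i)‖ := by
  let v : Fin m → EuclideanSpace 𝕜 (Fin m) := fun i => WithLp.toLp 2 (A i)
  have hdim : Module.finrank 𝕜 (EuclideanSpace 𝕜 (Fin m)) = Fintype.card (Fin m) := by simp
  let e := InnerProductSpace.gramSchmidtOrthonormalBasis hdim v
  let b := EuclideanSpace.basisFun (Fin m) 𝕜
  have hA : b.toBasis.det v = A.det := by
    rw [Module.Basis.det_apply, ← Matrix.det_transpose]
    rfl
  have hbe : b.toBasis.det v = b.toBasis.det e * e.toBasis.det v :=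
    congr($(AlternatingMap.eq_smul_basis_det e.toBasis b.toBasis.det) v)
  rw [← hA, hbe, norm_mul, b.det_to_matrix_orthonormalBasis e, one_mul,
    InnerProductSpace.gramSchmidtOrthonormalBasis_det hdim v, norm_prod]
  gcongr with i
  simpa [e.orthonormal.1 i] using norm_inner_le_norm (𝕜 := 𝕜) (e i) (v i)

theorem EuclideanSpace.norm_le_sqrt_card_mul {𝕜 ι : Type*} [RCLike 𝕜] [Fintype ι]
    (x : EuclideanSpace 𝕜 ι) {c : ℝ} (hc : 0 ≤ c) (hx : ∀ i, ‖x i‖ ≤ c) :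
    ‖x‖ ≤ √(Fintype.card ι) * c := by
  calc ‖x‖ = √(∑ i, ‖x i‖ ^ 2) := EuclideanSpace.norm_eq x
    _ ≤ √(∑ _ : ι, c ^ 2) := by gcongr with i; exact hx i
    _ = √(Fintype.card ι) * c := by simp [Real.sqrt_mul, hc]

section NormedCommRing

variable {R : Type*} [NormedCommRing R] [NormMulClass R] [NormOneClass R]

theorem Matrix.norm_det_vandermonde {n : ℕ} (v : Fin n → R) :
    ‖(vandermonde v).det‖ = ∏ i, ∏ j ∈ Ioi i, ‖v i - v j‖ := by
  simp only [det_vandermonde, norm_prod, norm_sub_rev]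

theorem prod_Ioi_norm_sub_comp_perm {n : ℕ} (v : Fin n → R) (σ : Equiv.Perm (Fin n)) :
    ∏ i, ∏ j ∈ Ioi i, ‖v (σ i) - v (σ j)‖ = ∏ i, ∏ j ∈ Ioi i, ‖v i - v j‖ := by
  have h := congr(‖$(σ.prod_Ioi_comp_eq_sign_mul_prod (f := fun i j => v i - v j)
    fun i j => (neg_sub _ _).symm)‖)
  rcases Int.units_eq_one_or (Equiv.Perm.sign σ) with hσ | hσ <;> simpa [norm_prod, hσ] using h

theorem prod_Ioi_norm_sub_eq_mul_succAbove {n : ℕ} (v : Fin (n + 1) → R) (p : Fin (n + 1)) :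
    ∏ i, ∏ j ∈ Ioi i, ‖v i - v j‖ = (∏ j, ‖v p - v (p.succAbove j)‖) *
      ∏ i, ∏ j ∈ Ioi i, ‖v (p.succAbove i) - v (p.succAbove j)‖ := by
  -- `p.cycleRange.symm` sends `0` to `p` and `j.succ` to `p.succAbove j`.
  rw [← prod_Ioi_norm_sub_comp_perm v p.cycleRange.symm, Fin.prod_univ_succ, Fin.prod_Ioi_zero]
  simp

end NormedCommRing

theorem prod_Ioi_norm_sub_le {𝕜 : Type*} [RCLike 𝕜] {m : ℕ} (v : Fin m → 𝕜) :
    ∏ i, ∏ j ∈ Ioi i, ‖v i - v j‖ ≤ √m ^ m * ∏ i, max 1 ‖v i‖ ^ (m - 1) := by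
  have hrow (i : Fin m) :
      ‖WithLp.toLp 2 (Matrix.vandermonde v i)‖ ≤ √m * max 1 ‖v i‖ ^ (m - 1) := by
    refine (EuclideanSpace.norm_le_sqrt_card_mul _
      (c := max 1 ‖v i‖ ^ (m - 1)) (by positivity) fun j => ?_).trans_eq
      (by rw [Fintype.card_fin])
    simp only [Matrix.vandermonde_apply, norm_pow]
    calc ‖v i‖ ^ (j : ℕ) ≤ max 1 ‖v i‖ ^ (j : ℕ) := by gcongr; exact le_max_right _ _
      _ ≤ max 1 ‖v i‖ ^ (m - 1) := pow_le_pow_right₀ (le_max_left _ _) (by omega)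
  calc ∏ i, ∏ j ∈ Ioi i, ‖v i - v j‖ = ‖(Matrix.vandermonde v).det‖ :=
        (Matrix.norm_det_vandermonde v).symm
    _ ≤ ∏ i, √m * max 1 ‖v i‖ ^ (m - 1) :=
        (Matrix.norm_det_le_prod_norm_row _).trans
          (prod_le_prod (fun _ _ => norm_nonneg _) fun i _ => hrow i)
    _ = √m ^ m * ∏ i, max 1 ‖v i‖ ^ (m - 1) := by simp [prod_mul_distrib]

theorem norm_sub_le_two_mul_of_norm_sub_le {E : Type*} [SeminormedAddCommGroup E] {a b z : E}
    (h : ‖z - a‖ ≤ ‖z - b‖) : ‖a - b‖ ≤ 2 * ‖z - b‖ := by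
  calc ‖a - b‖ ≤ ‖a - z‖ + ‖z - b‖ := norm_sub_le_norm_sub_add_norm_sub a z b
    _ ≤ 2 * ‖z - b‖ := by rw [norm_sub_rev]; linarith

theorem prod_Ioi_norm_sub_mul_norm_sub_le {𝕜 : Type*} [RCLike 𝕜] {m : ℕ}
    (v : Fin (m + 2) → 𝕜) (z : 𝕜) (p : Fin (m + 2)) (hp : ∀ j, ‖z - v p‖ ≤ ‖z - v j‖) :
    (∏ i, ∏ j ∈ Ioi i, ‖v i - v j‖) * ‖z - v p‖ ≤
      2 ^ (m + 1) * √(m + 1 : ℕ) ^ (m + 1) * (∏ i, max 1 ‖v i‖) ^ m * ∏ i, ‖z - v i‖ := by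
  set w := v ∘ p.succAbove
  have hnear : ∏ j, ‖v p - w j‖ ≤ 2 ^ (m + 1) * ∏ j, ‖z - w j‖ := by
    calc ∏ j, ‖v p - w j‖ ≤ ∏ j, 2 * ‖z - w j‖ :=
          prod_le_prod (fun _ _ => norm_nonneg _)
            fun j _ => norm_sub_le_two_mul_of_norm_sub_le (hp _)
      _ = 2 ^ (m + 1) * ∏ j, ‖z - w j‖ := by simp [prod_mul_distrib]
  have hfar :
      ∏ i, ∏ j ∈ Ioi i, ‖w i - w j‖ ≤ √(m + 1 : ℕ) ^ (m + 1) * (∏ i, max 1 ‖w i‖) ^ m := by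
    simpa [prod_pow] using prod_Ioi_norm_sub_le w
  have hmax : ∏ i, max 1 ‖w i‖ ≤ ∏ i, max 1 ‖v i‖ := by
    rw [Fin.prod_univ_succAbove _ p]
    exact le_mul_of_one_le_left (by positivity) (le_max_left _ _)
  rw [prod_Ioi_norm_sub_eq_mul_succAbove v p, Fin.prod_univ_succAbove (fun i => ‖z - v i‖) p]
  calc (∏ j, ‖v p - w j‖) * (∏ i, ∏ j ∈ Ioi i, ‖w i - w j‖) * ‖z - v p‖
      ≤ (2 ^ (m + 1) * ∏ j, ‖z - w j‖) *
          (√(m + 1 : ℕ) ^ (m + 1) * (∏ i, max 1 ‖v i‖) ^ m) * ‖z - v p‖ := by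
        gcongr
        exact hfar.trans (by gcongr)
    _ = _ := by simp only [w, Function.comp_apply]; ring

theorem Real.sqrt_pow_le_rpow {x y : ℝ} (hx : 0 ≤ x) (hxy : x ≤ y) (k : ℕ) :
    √x ^ k ≤ y ^ ((k : ℝ) / 2) := by
  rw [Real.sqrt_eq_rpow, ← Real.rpow_natCast, ← Real.rpow_mul hx, one_div_mul_eq_div]
  exact Real.rpow_le_rpow hx hxy (by positivity)

open Polynomial Finset in
theorem stmt_14 (n : ℕ) (hn : 2 ≤ n) (f : Polynomial ℂ)
    (α : Fin n → ℂ)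
    (hroots : f = C f.leadingCoeff * ∏ i, (X - C (α i)))
    (M D : ℝ)
    (hM : M = ‖f.leadingCoeff‖ * ∏ i, max 1 (‖α i‖))
    (hD : D = (‖f.leadingCoeff‖) ^ (2 * n - 2) *
      ‖∏ i, ∏ j ∈ univ.filter (fun j => i < j), (α i - α j) ^ 2‖)
    (z : ℂ) :
    ‖f.eval z‖ ≥
      Real.sqrt D / ((n : ℝ) ^ (((n : ℝ) - 1) / 2) * 2 ^ (n - 1) * M ^ (n - 2)) *
        (univ.inf' ⟨⟨0, by omega⟩, mem_univ _⟩ fun i => ‖z - α i‖) := by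
  obtain ⟨m, rfl⟩ : ∃ m, n = m + 2 := ⟨n - 2, by omega⟩
  obtain ⟨p, -, hp⟩ := exists_mem_eq_inf' ⟨⟨0, by omega⟩, mem_univ _⟩ fun i => ‖z - α i‖
  have hmin (j : Fin (m + 2)) : ‖z - α p‖ ≤ ‖z - α j‖ := hp ▸ inf'_le _ (mem_univ j)
  set a := ‖f.leadingCoeff‖
  have heval : ‖f.eval z‖ = a * ∏ i, ‖z - α i‖ := by
    rw [hroots]
    simp [eval_prod, norm_prod, a]
  have hsqrtD : √D = a ^ (m + 1) * ∏ i, ∏ j ∈ Ioi i, ‖α i - α j‖ := by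
    rw [← Real.sqrt_sq (by positivity : 0 ≤ a ^ (m + 1) * ∏ i, ∏ j ∈ Ioi i, ‖α i - α j‖), hD,
      show 2 * (m + 2) - 2 = (m + 1) * 2 by omega, pow_mul]
    congr 1
    simp only [filter_lt_eq_Ioi, norm_prod, norm_pow, mul_pow, prod_pow]
  have hconst : √(m + 1 : ℕ) ^ (m + 1) ≤ ((m + 2 : ℕ) : ℝ) ^ ((((m + 2 : ℕ) : ℝ) - 1) / 2) := by
    convert Real.sqrt_pow_le_rpow (Nat.cast_nonneg _) (Nat.cast_le.mpr (Nat.le_succ _)) (m + 1)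
      using 2
    push_cast; ring
  have hM0 : 0 ≤ M := hM ▸ by positivity
  rw [hp, ge_iff_le, div_mul_eq_mul_div]
  refine div_le_of_le_mul₀ (by positivity) (norm_nonneg _) ?_
  rw [show m + 2 - 1 = m + 1 by omega, show m + 2 - 2 = m by omega]
  calc √D * ‖z - α p‖ = a ^ (m + 1) * ((∏ i, ∏ j ∈ Ioi i, ‖α i - α j‖) * ‖z - α p‖) := by
        rw [hsqrtD]; ring
    _ ≤ a ^ (m + 1) * (2 ^ (m + 1) * √(m + 1 : ℕ) ^ (m + 1) * (∏ i, max 1 ‖α i‖) ^ m *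
          ∏ i, ‖z - α i‖) :=
        mul_le_mul_of_nonneg_left (prod_Ioi_norm_sub_mul_norm_sub_le α z p hmin) (by positivity)
    _ = (a * ∏ i, ‖z - α i‖) * (√(m + 1 : ℕ) ^ (m + 1) * 2 ^ (m + 1) *
          (a * ∏ i, max 1 ‖α i‖) ^ m) := by ring
    _ ≤ _ := by
        rw [← heval, ← hM]
        gcongr
end
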